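/- arXiv:1905.02141 — 6 statements merged into one kernel-verified Lean document; each statement's English description precedes it below -/
import Mathlib

section
/- Let G be a finite simple graph, L an edge cover of G of minimal cardinality μ(G), and M a matching of G contained in L that is maximal among matchings contained in L. Then 2|M| + (μ(G) − |M|) equals the number of vertices of G. -/
open Finset

variable {V : Type*}

/-- A matching of a simple graph: a finite set of edges that are pairwise vertex-disjoint. -/
def IsMatching (G : SimpleGraph V) (M : Finset (Sym2 V)) : Prop :=
  (∀ e ∈ M, e ∈ G.edgeSet) ∧
    ∀ e ∈ M, ∀ f ∈ M, e ≠ f → ∀ v : V, v ∈ e → v ∉ f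

/-- The matching number: maximal cardinality of a matching. -/
noncomputable def matNum (G : SimpleGraph V) : ℕ :=
  sSup {k | ∃ M : Finset (Sym2 V), IsMatching G M ∧ M.card = k}

/-- An edge cover: a finite set of edges covering every vertex. -/
def IsEdgeCover (G : SimpleGraph V) (L : Finset (Sym2 V)) : Prop :=
  (∀ e ∈ L, e ∈ G.edgeSet) ∧ ∀ v : V, ∃ e ∈ L, v ∈ e

/-- The minimal cardinality of an edge cover. -/
noncomputable def coverNum (G : SimpleGraph V) : ℕ :=
  sInf {k | ∃ L : Finset (Sym2 V), IsEdgeCover G L ∧ L.card = k}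

/-- The cone `G*` over a graph `G` on `Fin n`: a new apex vertex `Fin.last n`
joined to all old vertices, old vertices embedded via `Fin.castSucc`. -/
def cone {n : ℕ} (G : SimpleGraph (Fin n)) : SimpleGraph (Fin (n + 1)) :=
  SimpleGraph.fromRel (fun a b =>
    b = Fin.last n ∨ ∃ x y : Fin n, G.Adj x y ∧ a = x.castSucc ∧ b = y.castSucc)

/-- A graph is non-bipartite iff it contains an odd cycle. -/
def HasOddCycle (G : SimpleGraph V) : Prop :=
  ∃ (u : V) (C : G.Walk u u), C.IsCycle ∧ Odd C.length

/-- The odd cycle condition: any two vertex-disjoint odd cycles lying in the same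
connected component are joined by an edge. -/
def OddCycleCondition (G : SimpleGraph V) : Prop :=
  ∀ (u w : V) (C : G.Walk u u) (C' : G.Walk w w),
    C.IsCycle → C'.IsCycle → Odd C.length → Odd C'.length →
    G.Reachable u w → (∀ v, v ∈ C.support → v ∉ C'.support) →
    ∃ a ∈ C.support, ∃ b ∈ C'.support, G.Adj a b

/-- If `L` is a minimum edge cover and `M ⊆ L` is a matching maximal among matchings
contained in `L`, then `2|M| + (μ(G) - |M|) = n`. -/
theorem stmt1 {n : ℕ} (G : SimpleGraph (Fin n)) (hiso : ∀ v, ∃ w, G.Adj v w)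
    (L M : Finset (Sym2 (Fin n)))
    (hL : IsEdgeCover G L) (hLmin : L.card = coverNum G)
    (hM : IsMatching G M) (hML : M ⊆ L)
    (hmax : ∀ M' : Finset (Sym2 (Fin n)), IsMatching G M' → M' ⊆ L → M ⊆ M' → M' = M) :
    2 * M.card + (coverNum G - M.card) = n := by
  classical
  set VM : Finset (Fin n) := M.biUnion (fun e => univ.filter (· ∈ e)) with hVMdef
  have hmemVM : ∀ v : Fin n, v ∈ VM ↔ ∃ e ∈ M, v ∈ e := by
    intro v; simp [hVMdef]
  have hlb : ∀ L' : Finset (Sym2 (Fin n)), IsEdgeCover G L' → coverNum G ≤ L'.card := by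
    intro L' hL'
    exact Nat.sInf_le ⟨L', hL', rfl⟩
  -- |VM| = 2|M|
  have hcardVM : VM.card = 2 * M.card := by
    rw [hVMdef, Finset.card_biUnion]
    · rw [Finset.sum_congr rfl (g := fun _ => 2), Finset.sum_const, smul_eq_mul, mul_comm]
      intro e he
      have hne : ¬ e.IsDiag := G.not_isDiag_of_mem_edgeSet (hL.1 e (hML he))
      induction e with
      | h a b =>
        have hab : a ≠ b := by simpa using hne
        have : univ.filter (· ∈ s(a, b)) = {a, b} := by
          ext v; simp [Sym2.mem_iff]
        rw [this, Finset.card_insert_of_notMem (by simpa using hab), Finset.card_singleton]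
    · intro e he f hf hef
      simp only [Finset.disjoint_left, Finset.mem_filter]
      rintro v ⟨-, hv⟩ ⟨-, hv'⟩
      exact hM.2 e he f hf hef v hv hv'
  -- erasing an edge whose vertices remain covered contradicts minimality
  have herase : ∀ e ∈ L, (∀ v ∈ e, ∃ f ∈ L.erase e, v ∈ f) → False := by
    intro e he hcov
    have hcover : IsEdgeCover G (L.erase e) := by
      refine ⟨fun f hf => hL.1 f (Finset.mem_of_mem_erase hf), fun v => ?_⟩
      obtain ⟨f, hf, hvf⟩ := hL.2 v
      by_cases hfe : f = e
      · exact hcov v (hfe ▸ hvf)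
      · exact ⟨f, Finset.mem_erase.2 ⟨hfe, hf⟩, hvf⟩
    have h1 : 1 ≤ L.card := Finset.card_pos.2 ⟨e, he⟩
    have := hlb _ hcover
    rw [Finset.card_erase_of_mem he] at this
    omega
  -- every edge of L \ M has a vertex outside VM
  have hexists : ∀ e ∈ L \ M, ∃ v, v ∈ e ∧ v ∉ VM := by
    intro e he
    rw [Finset.mem_sdiff] at he
    by_contra hcon
    push_neg at hcon
    refine herase e he.1 fun v hv => ?_
    obtain ⟨g, hg, hvg⟩ := (hmemVM v).1 (hcon v hv)
    exact ⟨g, Finset.mem_erase.2 ⟨fun h => he.2 (h ▸ hg), hML hg⟩, hvg⟩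
  -- uniqueness of the outside vertex within an edge
  have huniq : ∀ e ∈ L \ M, ∀ v w : Fin n, v ∈ e → w ∈ e → v ∉ VM → w ∉ VM → v = w := by
    intro e he v w hv hw hvM hwM
    rw [Finset.mem_sdiff] at he
    by_contra hvw
    have heq : e = s(v, w) := (Sym2.mem_and_mem_iff hvw).1 ⟨hv, hw⟩
    have hmem : ∀ u : Fin n, u ∈ e → u ∉ VM := by
      intro u hu
      rw [heq, Sym2.mem_iff] at hu
      rcases hu with rfl | rfl <;> assumption
    have hM' : IsMatching G (insert e M) := by
      constructor
      · intro f hf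
        rcases Finset.mem_insert.1 hf with rfl | hf
        · exact hL.1 f he.1
        · exact hM.1 f hf
      · intro a ha b hb hab u hua hub
        rcases Finset.mem_insert.1 ha with hae | haM
        · rcases Finset.mem_insert.1 hb with hbe | hbM
          · exact hab (hae.trans hbe.symm)
          · exact hmem u (hae ▸ hua) ((hmemVM u).2 ⟨b, hbM, hub⟩)
        · rcases Finset.mem_insert.1 hb with hbe | hbM
          · exact hmem u (hbe ▸ hub) ((hmemVM u).2 ⟨a, haM, hua⟩)
          · exact hM.2 a haM b hbM hab u hua hub
    have := hmax _ hM' (Finset.insert_subset he.1 hML) (Finset.subset_insert _ _)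
    exact he.2 (this ▸ Finset.mem_insert_self e M)
  -- injectivity: two distinct edges of L \ M cannot share the same outside vertex
  have hinj : ∀ e ∈ L \ M, ∀ f ∈ L \ M, ∀ v : Fin n, v ∈ e → v ∈ f → v ∉ VM → e = f := by
    intro e he f hf v hve hvf hvM
    by_contra hef
    rw [Finset.mem_sdiff] at he hf
    refine herase e he.1 fun u hu => ?_
    by_cases huv : u = v
    · exact ⟨f, Finset.mem_erase.2 ⟨fun h => hef h.symm, hf.1⟩, huv ▸ hvf⟩
    · have huVM : u ∈ VM := by
        by_contra huVM
        exact huv (huniq e (Finset.mem_sdiff.2 he) u v hu hve huVM hvM)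
      obtain ⟨g, hg, hug⟩ := (hmemVM u).1 huVM
      exact ⟨g, Finset.mem_erase.2 ⟨fun h => he.2 (h ▸ hg), hML hg⟩, hug⟩
  -- bijection between L \ M and univ \ VM
  have hbij : (L \ M).card = (univ \ VM).card := by
    refine Finset.card_bij (fun e he => Classical.choose (hexists e he)) ?_ ?_ ?_
    · intro e he
      have h := Classical.choose_spec (hexists e he)
      exact Finset.mem_sdiff.2 ⟨Finset.mem_univ _, h.2⟩
    · intro e he f hf heq
      have h1 := Classical.choose_spec (hexists e he)
      have h2 := Classical.choose_spec (hexists f hf)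
      have heq' : Classical.choose (hexists e he) = Classical.choose (hexists f hf) := heq
      exact hinj e he f hf _ h1.1 (by rw [heq']; exact h2.1) h1.2
    · intro v hv
      rw [Finset.mem_sdiff] at hv
      obtain ⟨e, heL, hve⟩ := hL.2 v
      have heM : e ∉ M := fun h => hv.2 ((hmemVM v).2 ⟨e, h, hve⟩)
      have he : e ∈ L \ M := Finset.mem_sdiff.2 ⟨heL, heM⟩
      refine ⟨e, he, ?_⟩
      have h := Classical.choose_spec (hexists e he)
      exact (huniq e he v _ hve h.1 hv.2 h.2).symm
  have hcardsdiff : (L \ M).card = L.card - M.card := Finset.card_sdiff_of_subset hML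
  have hcarduniv : (univ \ VM).card = n - VM.card := by
    rw [Finset.card_sdiff_of_subset (Finset.subset_univ _), Finset.card_univ, Fintype.card_fin]
  have hVMle : VM.card ≤ n := by
    have := Finset.card_le_univ VM
    simpa using this
  have hMleL : M.card ≤ L.card := Finset.card_le_card hML
  rw [hcardsdiff, hcarduniv, hcardVM] at hbij
  omega
end

section
/- Let G be a finite simple graph on [n] and G* the cone over G with apex n+1. If G is connected and non-bipartite, then for every vertex i ∈ [n+1], every connected component of the induced subgraph of G* on [n+1] \ {i} is non-bipartite. -/
open Finset

variable {V : Type*}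

/-- If `G` is connected and non-bipartite, then for every vertex `i` of the cone `G*`,
every connected component of the induced subgraph of `G*` on the complement of `{i}`
is non-bipartite (contains an odd cycle). -/
theorem stmt6 {n : ℕ} (G : SimpleGraph (Fin n)) (hconn : G.Connected)
    (hodd : HasOddCycle G) (i : Fin (n + 1))
    (c : ((cone G).induce {v | v ≠ i}).ConnectedComponent) :
    HasOddCycle (((cone G).induce {v | v ≠ i}).induce c.supp) := by
  classical
  obtain ⟨u, C, hC, hCodd⟩ := hodd
  -- the key vertex map
  set f : Fin n → Fin (n + 1) :=
    fun x => if x.castSucc = i then Fin.last n else x.castSucc with hf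
  have hfne : ∀ x, f x ≠ i := by
    intro x
    by_cases h : x.castSucc = i
    · simp only [hf, if_pos h]
      exact fun hli => (Fin.castSucc_lt_last x).ne (h.trans hli.symm)
    · simpa only [hf, if_neg h] using h
  have hfinj : Function.Injective f := by
    intro x y hxy
    by_cases hx : x.castSucc = i <;> by_cases hy : y.castSucc = i
    · exact Fin.castSucc_injective n (hx.trans hy.symm)
    · rw [hf] at hxy; simp only [if_pos hx, if_neg hy] at hxy
      exact absurd hxy.symm (Fin.castSucc_lt_last y).ne
    · rw [hf] at hxy; simp only [if_neg hx, if_pos hy] at hxy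
      exact absurd hxy (Fin.castSucc_lt_last x).ne
    · rw [hf] at hxy; simp only [if_neg hx, if_neg hy] at hxy
      exact Fin.castSucc_injective n hxy
  have hadj : ∀ x y, G.Adj x y → (cone G).Adj (f x) (f y) := by
    intro x y hxy
    rw [cone, SimpleGraph.fromRel_adj]
    by_cases hx : x.castSucc = i <;> by_cases hy : y.castSucc = i
    · exact absurd (Fin.castSucc_injective n (hx.trans hy.symm)) hxy.ne
    · simp only [hf, if_pos hx, if_neg hy]
      exact ⟨(Fin.castSucc_lt_last y).ne', Or.inr (Or.inl trivial)⟩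
    · simp only [hf, if_neg hx, if_pos hy]
      exact ⟨(Fin.castSucc_lt_last x).ne, Or.inl (Or.inl trivial)⟩
    · simp only [hf, if_neg hx, if_neg hy]
      exact ⟨fun h => hxy.ne (Fin.castSucc_injective n h),
        Or.inl (Or.inr ⟨x, y, hxy, rfl, rfl⟩)⟩
  have hfsurj : ∀ v : Fin (n + 1), v ≠ i → ∃ x, f x = v := by
    intro v hv
    by_cases hvl : v = Fin.last n
    · have hi : i ≠ Fin.last n := fun h => hv (hvl.trans h.symm)
      obtain ⟨j, hj⟩ := Fin.exists_castSucc_eq.mpr hi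
      exact ⟨j, by simp only [hf, if_pos hj, hvl]⟩
    · obtain ⟨x, hx⟩ := Fin.exists_castSucc_eq.mpr hvl
      refine ⟨x, ?_⟩
      have : x.castSucc ≠ i := fun h => hv (hx ▸ h)
      simp only [hf, if_neg this, hx]
  -- the hom into the punctured cone
  let F : G →g (cone G).induce {v : Fin (n + 1) | v ≠ i} :=
    { toFun := fun x => ⟨f x, hfne x⟩
      map_rel' := fun h => hadj _ _ h }
  -- every image vertex lies in the component c
  induction c using SimpleGraph.ConnectedComponent.ind with
  | _ v0 =>
    obtain ⟨y, hy⟩ := hfsurj v0.1 v0.2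
    have hv0 : v0 = F y := Subtype.ext hy.symm
    have hmem : ∀ x : Fin n,
        F x ∈ (((cone G).induce {v : Fin (n + 1) | v ≠ i}).connectedComponentMk v0).supp := by
      intro x
      rw [SimpleGraph.ConnectedComponent.mem_supp_iff, SimpleGraph.ConnectedComponent.eq, hv0]
      exact (hconn.preconnected x y).map F
    -- final hom into the induced component
    let F2 : G →g (((cone G).induce {v : Fin (n + 1) | v ≠ i}).induce
        (((cone G).induce {v : Fin (n + 1) | v ≠ i}).connectedComponentMk v0).supp) :=
      { toFun := fun x => ⟨F x, hmem x⟩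
        map_rel' := fun h => hadj _ _ h }
    have hF2inj : Function.Injective F2 := by
      intro a b hab
      apply hfinj
      exact congrArg (fun z => z.1.1) hab
    exact ⟨F2 u, C.map F2, hC.map hF2inj, by rw [SimpleGraph.Walk.length_map]; exact hCodd⟩
end

section
/- Let G be a finite simple graph on [n] with connected components G_1, …, G_c, and let G* be the cone over G with apex n+1. Then G* satisfies the odd cycle condition if and only if each G_i satisfies the odd cycle condition and at most one of G_1, …, G_c is non-bipartite. -/
open Finset

variable {V : Type*}

open SimpleGraph

lemma pull_aux {α β : Type*} {A : SimpleGraph α} {B : SimpleGraph β} (f : A ↪g B)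
    {a b : β} (p : B.Walk a b) :
    (∀ w ∈ p.support, w ∈ Set.range f) → ∀ (u v : α) (hu : f u = a) (hv : f v = b),
      ∃ q : A.Walk u v, q.map f.toHom = p.copy hu.symm hv.symm := by
  induction p with
  | nil =>
    intro _ u v hu hv
    subst hu
    obtain rfl := f.injective hv
    exact ⟨.nil, rfl⟩
  | @cons a c b h p ih =>
    intro hs u v hu hv
    subst hu; subst hv
    obtain ⟨x, hx⟩ := hs c (by simp)
    subst hx
    obtain ⟨q, hq⟩ := ih (fun w hw => hs w (by simp [hw])) x v rfl rfl
    exact ⟨SimpleGraph.Walk.cons (f.map_rel_iff.mp h) q, by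
      simp only [SimpleGraph.Walk.map_cons, hq, SimpleGraph.Walk.copy_rfl_rfl]⟩

lemma pull_loop {α β : Type*} {A : SimpleGraph α} {B : SimpleGraph β} (f : A ↪g B)
    {u : α} (p : B.Walk (f u) (f u)) (hs : ∀ w ∈ p.support, w ∈ Set.range f) :
    ∃ q : A.Walk u u, q.map f.toHom = p := by
  simpa using pull_aux f p hs u u rfl rfl

lemma cone_adj_cast {n : ℕ} (G : SimpleGraph (Fin n)) (x y : Fin n) :
    (cone G).Adj x.castSucc y.castSucc ↔ G.Adj x y := by
  simp only [cone, fromRel_adj]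
  constructor
  · rintro ⟨hne, (h | ⟨x', y', h, hx, hy⟩) | (h | ⟨x', y', h, hx, hy⟩)⟩
    · exact absurd h (Fin.castSucc_lt_last y).ne
    · rw [Fin.castSucc_injective _ hx, Fin.castSucc_injective _ hy]; exact h
    · exact absurd h (Fin.castSucc_lt_last x).ne
    · rw [Fin.castSucc_injective _ hy, Fin.castSucc_injective _ hx]; exact h.symm
  · intro h
    exact ⟨fun he => h.ne (Fin.castSucc_injective _ he), Or.inl (Or.inr ⟨x, y, h, rfl, rfl⟩)⟩

def coneEmb {n : ℕ} (G : SimpleGraph (Fin n)) : G ↪g cone G where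
  toFun := Fin.castSucc
  inj' := Fin.castSucc_injective n
  map_rel_iff' := cone_adj_cast G _ _

lemma cone_adj_last {n : ℕ} (G : SimpleGraph (Fin n)) {b : Fin (n+1)} (hb : b ≠ Fin.last n) :
    (cone G).Adj (Fin.last n) b := by
  simp only [cone, fromRel_adj]
  refine ⟨fun h => hb h.symm, ?_⟩; tauto

lemma cone_reachable {n : ℕ} (G : SimpleGraph (Fin n)) (u w : Fin (n+1)) :
    (cone G).Reachable u w := by
  by_cases hu : u = Fin.last n
  · subst hu
    by_cases hw : w = Fin.last n
    · subst hw; rfl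
    · exact (cone_adj_last G hw).reachable
  · by_cases hw : w = Fin.last n
    · subst hw; exact ((cone_adj_last G hu).reachable).symm
    · exact ((cone_adj_last G hu).reachable).symm.trans (cone_adj_last G hw).reachable

lemma walk_support_mem_supp {α : Type*} {A : SimpleGraph α} [DecidableEq α] {u v : α}
    (q : A.Walk u v) {x : α} (hx : x ∈ q.support) :
    x ∈ (A.connectedComponentMk u).supp := by
  rw [ConnectedComponent.mem_supp_iff]
  exact ConnectedComponent.sound ((q.takeUntil x hx).reachable).symm

/-- The cone `G*` satisfies the odd cycle condition iff every connected component of `G`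
satisfies the odd cycle condition and at most one connected component of `G` is
non-bipartite. -/
theorem stmt7 {n : ℕ} (G : SimpleGraph (Fin n)) :
    OddCycleCondition (cone G) ↔
      ((∀ c : G.ConnectedComponent, OddCycleCondition (G.induce c.supp)) ∧
        ∀ c c' : G.ConnectedComponent,
          HasOddCycle (G.induce c.supp) → HasOddCycle (G.induce c'.supp) → c = c') := by
  constructor
  · intro H
    have key : ∀ (c c' : G.ConnectedComponent) (u : c.supp) (w : c'.supp)
        (C : (G.induce c.supp).Walk u u) (C' : (G.induce c'.supp).Walk w w),
        C.IsCycle → C'.IsCycle → Odd C.length → Odd C'.length →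
        (∀ (v : Fin n), (∃ x ∈ C.support, (x : Fin n) = v) →
          ¬ ∃ y ∈ C'.support, (y : Fin n) = v) →
        ∃ a ∈ C.support, ∃ b ∈ C'.support, G.Adj a b := by
      intro c c' u w C C' hC hC' hoC hoC' hdisj
      set indc : G.induce c.supp ↪g G := SimpleGraph.Embedding.induce (c.supp : Set (Fin n))
      set indc' : G.induce c'.supp ↪g G := SimpleGraph.Embedding.induce (c'.supp : Set (Fin n))
      set D := (C.map indc.toHom).map (coneEmb G).toHom with hD
      set D' := (C'.map indc'.toHom).map (coneEmb G).toHom with hD'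
      have hDc : D.IsCycle :=
        (Walk.map_isCycle_iff_of_injective (coneEmb G).injective).mpr
          ((Walk.map_isCycle_iff_of_injective indc.injective).mpr hC)
      have hD'c : D'.IsCycle :=
        (Walk.map_isCycle_iff_of_injective (coneEmb G).injective).mpr
          ((Walk.map_isCycle_iff_of_injective indc'.injective).mpr hC')
      have hlen : D.length = C.length := by simp only [hD, Walk.length_map]
      have hlen' : D'.length = C'.length := by simp only [hD', Walk.length_map]
      have hsupp : ∀ v, v ∈ D.support ↔ ∃ x ∈ C.support, Fin.castSucc (x : Fin n) = v := by
        intro v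
        simp only [hD, Walk.support_map, List.mem_map]
        constructor
        · rintro ⟨_, ⟨x, hx, rfl⟩, rfl⟩; exact ⟨x, hx, rfl⟩
        · rintro ⟨x, hx, rfl⟩; exact ⟨_, ⟨x, hx, rfl⟩, rfl⟩
      have hsupp' : ∀ v, v ∈ D'.support ↔ ∃ y ∈ C'.support, Fin.castSucc (y : Fin n) = v := by
        intro v
        simp only [hD', Walk.support_map, List.mem_map]
        constructor
        · rintro ⟨_, ⟨y, hy, rfl⟩, rfl⟩; exact ⟨y, hy, rfl⟩
        · rintro ⟨y, hy, rfl⟩; exact ⟨_, ⟨y, hy, rfl⟩, rfl⟩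
      have hDdisj : ∀ v, v ∈ D.support → v ∉ D'.support := by
        intro v hv hv'
        obtain ⟨x, hx, hxv⟩ := (hsupp v).mp hv
        obtain ⟨y, hy, hyv⟩ := (hsupp' v).mp hv'
        have hxy : (x : Fin n) = (y : Fin n) :=
          Fin.castSucc_injective _ (hxv.trans hyv.symm)
        exact hdisj (x : Fin n) ⟨x, hx, rfl⟩ ⟨y, hy, hxy.symm⟩
      obtain ⟨a, ha, b, hb, hab⟩ := H _ _ D D' hDc hD'c
        (by rwa [hlen]) (by rwa [hlen']) (cone_reachable G _ _) hDdisj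
      obtain ⟨x, hx, rfl⟩ := (hsupp a).mp ha
      obtain ⟨y, hy, rfl⟩ := (hsupp' b).mp hb
      exact ⟨x, hx, ⟨y, hy, by
        have := (cone_adj_cast G _ _).mp hab
        exact this⟩⟩
    refine ⟨?_, ?_⟩
    · intro c u w C C' hC hC' hoC hoC' _ hdisj
      have hd : ∀ (v : Fin n), (∃ x ∈ C.support, (x : Fin n) = v) →
          ¬ ∃ y ∈ C'.support, (y : Fin n) = v := by
        rintro v ⟨x, hx, rfl⟩ ⟨y, hy, hyx⟩
        exact hdisj x hx (Subtype.ext hyx ▸ hy)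
      obtain ⟨a, ha, b, hb, hab⟩ := key c c u w C C' hC hC' hoC hoC' hd
      exact ⟨a, ha, b, hb, by simpa using hab⟩
    · rintro c c' ⟨u, C, hC, hoC⟩ ⟨w, C', hC', hoC'⟩
      by_contra hne
      have hd : ∀ (v : Fin n), (∃ x ∈ C.support, (x : Fin n) = v) →
          ¬ ∃ y ∈ C'.support, (y : Fin n) = v := by
        rintro v ⟨x, hx, rfl⟩ ⟨y, hy, hyx⟩
        apply hne
        rw [← (SimpleGraph.ConnectedComponent.mem_supp_iff _ _).mp x.2,
          ← (SimpleGraph.ConnectedComponent.mem_supp_iff _ _).mp y.2, hyx]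
      obtain ⟨a, ha, b, hb, hab⟩ := key c c' u w C C' hC hC' hoC hoC' hd
      exact hne (by
        rw [← (SimpleGraph.ConnectedComponent.mem_supp_iff _ _).mp a.2,
          ← (SimpleGraph.ConnectedComponent.mem_supp_iff _ _).mp b.2]
        exact ConnectedComponent.sound hab.reachable)
  · rintro ⟨h1, h2⟩ u w C C' hC hC' hoC hoC' _ hdisj
    by_cases hCl : Fin.last n ∈ C.support
    · have hw : w ≠ Fin.last n := fun h => hdisj _ hCl (h ▸ C'.start_mem_support)
      exact ⟨_, hCl, w, C'.start_mem_support, cone_adj_last G hw⟩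
    by_cases hC'l : Fin.last n ∈ C'.support
    · have hu : u ≠ Fin.last n := fun h => hCl (h ▸ C.start_mem_support)
      exact ⟨u, C.start_mem_support, _, hC'l, (cone_adj_last G hu).symm⟩
    have hCne : ∀ v ∈ C.support, v ≠ Fin.last n := fun v hv he => hCl (he ▸ hv)
    have hC'ne : ∀ v ∈ C'.support, v ≠ Fin.last n := fun v hv he => hC'l (he ▸ hv)
    have hu := hCne u C.start_mem_support
    have hw := hC'ne w C'.start_mem_support
    set u₀ := u.castPred hu with hu₀
    set w₀ := w.castPred hw with hw₀
    have hcu : Fin.castSucc u₀ = u := Fin.castSucc_castPred u hu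
    have hcw : Fin.castSucc w₀ = w := Fin.castSucc_castPred w hw
    -- pull back C and C' to G
    obtain ⟨q, hq⟩ := pull_loop (coneEmb G)
      (C.copy (show u = coneEmb G u₀ from hcu.symm) (show u = coneEmb G u₀ from hcu.symm))
      (by
        intro v hv
        rw [SimpleGraph.Walk.support_copy] at hv
        exact ⟨v.castPred (hCne v hv), Fin.castSucc_castPred v (hCne v hv)⟩)
    obtain ⟨q', hq'⟩ := pull_loop (coneEmb G)
      (C'.copy (show w = coneEmb G w₀ from hcw.symm) (show w = coneEmb G w₀ from hcw.symm))
      (by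
        intro v hv
        rw [SimpleGraph.Walk.support_copy] at hv
        exact ⟨v.castPred (hC'ne v hv), Fin.castSucc_castPred v (hC'ne v hv)⟩)
    have hqcyc : q.IsCycle :=
      (Walk.map_isCycle_iff_of_injective (coneEmb G).injective).mp
        (by rw [hq]; exact (Walk.isCycle_copy C hcu.symm).mpr hC)
    have hq'cyc : q'.IsCycle :=
      (Walk.map_isCycle_iff_of_injective (coneEmb G).injective).mp
        (by rw [hq']; exact (Walk.isCycle_copy C' hcw.symm).mpr hC')
    have hqlen : q.length = C.length := by
      have := congrArg SimpleGraph.Walk.length hq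
      simpa using this
    have hq'len : q'.length = C'.length := by
      have := congrArg SimpleGraph.Walk.length hq'
      simpa using this
    have hCsupp : C.support = q.support.map Fin.castSucc := by
      have := congrArg SimpleGraph.Walk.support hq
      rw [SimpleGraph.Walk.support_map, SimpleGraph.Walk.support_copy] at this
      exact this.symm
    have hC'supp : C'.support = q'.support.map Fin.castSucc := by
      have := congrArg SimpleGraph.Walk.support hq'
      rw [SimpleGraph.Walk.support_map, SimpleGraph.Walk.support_copy] at this
      exact this.symm
    -- components
    set c := G.connectedComponentMk u₀ with hc
    set c' := G.connectedComponentMk w₀ with hc'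
    set indc : G.induce c.supp ↪g G := SimpleGraph.Embedding.induce (c.supp : Set (Fin n))
    set indc' : G.induce c'.supp ↪g G := SimpleGraph.Embedding.induce (c'.supp : Set (Fin n))
    have hu₁ : u₀ ∈ c.supp := (SimpleGraph.ConnectedComponent.mem_supp_iff _ _).mpr rfl
    have hw₁ : w₀ ∈ c'.supp := (SimpleGraph.ConnectedComponent.mem_supp_iff _ _).mpr rfl
    obtain ⟨r, hr⟩ := pull_loop indc (u := ⟨u₀, hu₁⟩) q
      (fun x hx => ⟨⟨x, walk_support_mem_supp q hx⟩, rfl⟩)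
    obtain ⟨r', hr'⟩ := pull_loop indc' (u := ⟨w₀, hw₁⟩) q'
      (fun x hx => ⟨⟨x, walk_support_mem_supp q' hx⟩, rfl⟩)
    have hrcyc : r.IsCycle :=
      (Walk.map_isCycle_iff_of_injective indc.injective).mp (by rw [hr]; exact hqcyc)
    have hr'cyc : r'.IsCycle :=
      (Walk.map_isCycle_iff_of_injective indc'.injective).mp (by rw [hr']; exact hq'cyc)
    have hrlen : r.length = C.length := by
      have := congrArg SimpleGraph.Walk.length hr
      simp only [SimpleGraph.Walk.length_map] at this
      rw [this]; exact hqlen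
    have hr'len : r'.length = C'.length := by
      have := congrArg SimpleGraph.Walk.length hr'
      simp only [SimpleGraph.Walk.length_map] at this
      rw [this]; exact hq'len
    -- the two components coincide
    have hcc : c = c' := h2 c c' ⟨_, r, hrcyc, by rw [hrlen]; exact hoC⟩
      ⟨_, r', hr'cyc, by rw [hr'len]; exact hoC'⟩
    -- pull q' into induce c.supp
    have hw₂ : w₀ ∈ c.supp := by rw [hcc]; exact hw₁
    obtain ⟨r'', hr''⟩ := pull_loop indc (u := ⟨w₀, hw₂⟩) q'
      (fun x hx => ⟨⟨x, by rw [hcc]; exact walk_support_mem_supp q' hx⟩, rfl⟩)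
    have hr''cyc : r''.IsCycle :=
      (Walk.map_isCycle_iff_of_injective indc.injective).mp (by rw [hr'']; exact hq'cyc)
    have hr''len : r''.length = C'.length := by
      have := congrArg SimpleGraph.Walk.length hr''
      simp only [SimpleGraph.Walk.length_map] at this
      rw [this]; exact hq'len
    -- reachability inside the component
    have hreach0 : G.Reachable u₀ w₀ := SimpleGraph.ConnectedComponent.eq.mp hcc
    obtain ⟨p0⟩ := hreach0
    obtain ⟨p1, -⟩ := pull_aux indc p0
      (fun x hx => ⟨⟨x, walk_support_mem_supp p0 hx⟩, rfl⟩)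
      ⟨u₀, hu₁⟩ ⟨w₀, hw₂⟩ rfl rfl
    -- support transfer helpers
    have memC : ∀ x ∈ r.support, Fin.castSucc (x : Fin n) ∈ C.support := by
      intro x hx
      have hxq : (x : Fin n) ∈ q.support := by
        have := congrArg SimpleGraph.Walk.support hr
        rw [SimpleGraph.Walk.support_map] at this
        have h2 : (x : Fin n) ∈ List.map indc.toHom r.support := List.mem_map.mpr ⟨x, hx, rfl⟩
        rw [this] at h2; exact h2
      rw [hCsupp]
      exact List.mem_map.mpr ⟨_, hxq, rfl⟩
    have memC' : ∀ x ∈ r''.support, Fin.castSucc (x : Fin n) ∈ C'.support := by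
      intro x hx
      have hxq : (x : Fin n) ∈ q'.support := by
        have := congrArg SimpleGraph.Walk.support hr''
        rw [SimpleGraph.Walk.support_map] at this
        have h2 : (x : Fin n) ∈ List.map indc.toHom r''.support := List.mem_map.mpr ⟨x, hx, rfl⟩
        rw [this] at h2; exact h2
      rw [hC'supp]
      exact List.mem_map.mpr ⟨_, hxq, rfl⟩
    -- disjointness in the induced graph
    have hdisj2 : ∀ v, v ∈ r.support → v ∉ r''.support := by
      intro v hv hv'
      exact hdisj _ (memC v hv) (memC' v hv')
    obtain ⟨a, ha, b, hb, hab⟩ := h1 c _ _ r r'' hrcyc hr''cyc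
      (by rw [hrlen]; exact hoC) (by rw [hr''len]; exact hoC')
      p1.reachable hdisj2
    refine ⟨Fin.castSucc (a : Fin n), memC a ha, Fin.castSucc (b : Fin n), memC' b hb, ?_⟩
    rw [cone_adj_cast]
    simpa using hab
end

section
/- Let G be a finite simple graph and let G* be the cone over G. Say a graph satisfies the odd cycle condition if, for any two vertex-disjoint odd cycles C, C' lying in the same connected component, some edge of the graph joins a vertex of C to a vertex of C'. If G* satisfies the odd cycle condition, then every connected component of G satisfies the odd cycle condition. -/
open Finset

variable {V : Type*}

lemma cone_adj_castSucc {n : ℕ} {G : SimpleGraph (Fin n)} {a b : Fin n}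
    (hab : G.Adj a b) : (cone G).Adj a.castSucc b.castSucc := by
  refine ⟨fun hc => hab.ne (Fin.castSucc_injective n hc), Or.inl (Or.inr ⟨a, b, hab, rfl, rfl⟩)⟩

lemma cone_adj_apex {n : ℕ} {G : SimpleGraph (Fin n)} (a : Fin n) :
    (cone G).Adj a.castSucc (Fin.last n) :=
  ⟨Fin.ne_of_lt (Fin.castSucc_lt_last a), Or.inl (Or.inl rfl)⟩

lemma cone_adj_of_castSucc {n : ℕ} {G : SimpleGraph (Fin n)} {a b : Fin n}
    (hab : (cone G).Adj a.castSucc b.castSucc) : G.Adj a b := by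
  obtain ⟨hne, hr | hr⟩ := hab <;>
  · rcases hr with hl | ⟨x, y, hxy, hx, hy⟩
    · exact absurd hl (Fin.ne_of_lt (Fin.castSucc_lt_last _))
    · rw [Fin.castSucc_inj.mp hx, Fin.castSucc_inj.mp hy]
      first | exact hxy | exact hxy.symm

/-- If the cone `G*` satisfies the odd cycle condition, then every connected component
of `G` satisfies the odd cycle condition. -/
theorem stmt8 {n : ℕ} (G : SimpleGraph (Fin n)) (h : OddCycleCondition (cone G)) :
    ∀ c : G.ConnectedComponent, OddCycleCondition (G.induce c.supp) := by
  intro c u w C C' hC hC' hCo hCo' _ hdisj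
  let f : G.induce c.supp →g cone G :=
    { toFun := fun v => (v : Fin n).castSucc
      map_rel' := fun hab => cone_adj_castSucc hab }
  have hinj : Function.Injective f := fun a b hab =>
    Subtype.ext (Fin.castSucc_injective n hab)
  have hreach : (cone G).Reachable (f u) (f w) :=
    ((cone_adj_apex (u : Fin n)).reachable).trans
      ((cone_adj_apex (w : Fin n)).symm.reachable)
  have hdisj' : ∀ v, v ∈ (C.map f).support → v ∉ (C'.map f).support := by
    intro v hv hv'
    rw [SimpleGraph.Walk.support_map, List.mem_map] at hv hv'
    obtain ⟨a, ha, rfl⟩ := hv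
    obtain ⟨b, hb, hfb⟩ := hv'
    exact hdisj a ha (hinj hfb ▸ hb)
  obtain ⟨a, ha, b, hb, hab⟩ := h (f u) (f w) (C.map f) (C'.map f)
    (hC.map hinj) (hC'.map hinj)
    (by rwa [SimpleGraph.Walk.length_map]) (by rwa [SimpleGraph.Walk.length_map])
    hreach hdisj'
  rw [SimpleGraph.Walk.support_map, List.mem_map] at ha hb
  obtain ⟨a0, ha0, rfl⟩ := ha
  obtain ⟨b0, hb0, rfl⟩ := hb
  exact ⟨a0, ha0, b0, hb0, cone_adj_of_castSucc hab⟩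
end

section
/- Let A be an affine semigroup ring generated by monomials u₁,…,u_m in a polynomial ring S = K[x₁,…,x_n], and let B = A ∩ K[x_i : i ∈ T] be a combinatorial pure subring for some T ⊆ [n]. Then for any exponent vector a with x^a ∈ B, a face F of the squarefree divisor complex of A at a (i.e., u^F = ∏_{i∈F} u_i divides x^a within A) is exactly a face of the squarefree divisor complex of B at a; that is, Δ_a(B) = Δ_a(A). -/
open Finset

/-- Combinatorial pure subrings: let `A` be generated by monomials `u₁,…,u_m`
(recorded by their exponent vectors `u : Fin m → (Fin n → ℕ)`), `T ⊆ [n]`, and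
`B = A ∩ K[x_i : i ∈ T]`.  For any exponent vector `a` with `x^a ∈ B`, the squarefree
divisor complex of `B` at `a` equals the squarefree divisor complex of `A` at `a`:
a set `F` is a face of `Δ_a(A)` (i.e. `u^F = ∏_{i ∈ F} u_i` divides `x^a` within `A`)
iff it is a face of `Δ_a(B)` (all `u_i`, `i ∈ F`, have support in `T`, and `x^a / u^F`
is a product of the generators with support in `T`). -/
theorem stmt11 {n m : ℕ} (u : Fin m → (Fin n → ℕ)) (T : Set (Fin n)) (a : Fin n → ℕ)
    (haA : ∃ c : Fin m → ℕ, a = ∑ j, c j • u j)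
    (haT : ∀ i, a i ≠ 0 → i ∈ T) :
    ∀ F : Finset (Fin m),
      (∃ b : Fin n → ℕ, (∃ c : Fin m → ℕ, b = ∑ j, c j • u j) ∧
          a = (∑ i ∈ F, u i) + b) ↔
      ((∀ i ∈ F, ∀ k, u i k ≠ 0 → k ∈ T) ∧
        ∃ c : Fin m → ℕ, (∀ j, c j ≠ 0 → ∀ k, u j k ≠ 0 → k ∈ T) ∧
          a = (∑ i ∈ F, u i) + ∑ j, c j • u j) := by
  intro F
  constructor
  · rintro ⟨b, ⟨c, rfl⟩, hab⟩
    have hk : ∀ k, a k = (∑ i ∈ F, u i k) + ∑ j, c j * u j k := by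
      intro k
      rw [hab]
      simp [Finset.sum_apply]
    refine ⟨?_, c, ?_, hab⟩
    · intro i hi k hik
      refine haT k ?_
      have h1 : u i k ≤ ∑ i ∈ F, u i k :=
        Finset.single_le_sum (f := fun i => u i k) (fun _ _ => Nat.zero_le _) hi
      have := hk k
      omega
    · intro j hj k hjk
      refine haT k ?_
      have h1 : c j * u j k ≤ ∑ j, c j * u j k :=
        Finset.single_le_sum (f := fun j => c j * u j k) (fun _ _ => Nat.zero_le _) (Finset.mem_univ j)
      have h2 : 0 < c j * u j k := Nat.mul_pos (Nat.pos_of_ne_zero hj) (Nat.pos_of_ne_zero hjk)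
      have := hk k
      omega
  · rintro ⟨_, c, _, hab⟩
    exact ⟨∑ j, c j • u j, ⟨c, rfl⟩, hab⟩
end

section
/- Let u_i = x_{2i-1}x_{2i} for i = 1,…,m and v_j = x_j x_{2m+1} for j = 1,…,2m, and let H ⊆ ℕ^{2m+1} be the affine semigroup generated by the exponent vectors of these monomials. Let a be the exponent vector of x₁x₂⋯x_{2m} x_{2m+1}^{2m-2}. Then the facets of the squarefree divisor complex Δ_a are exactly the m sets F_i = {u_i} ∪ {v_1,…,v_{2m}} \ {v_{2i-1}, v_{2i}} for i = 1,…,m (m ≥ 2). -/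
open Finset

/-- Exponent vector of `u_i = x_{2i-1} x_{2i}` (0-indexed: `x_{2i} x_{2i+1}`). -/
def uGen (m : ℕ) (i : Fin m) : Fin (2 * m + 1) → ℕ :=
  fun k => if k.val = 2 * i.val ∨ k.val = 2 * i.val + 1 then 1 else 0

/-- Exponent vector of `v_j = x_j x_{2m+1}` (apex variable has index `2m`). -/
def vGen (m : ℕ) (j : Fin (2 * m)) : Fin (2 * m + 1) → ℕ :=
  fun k => if k.val = j.val ∨ k.val = 2 * m then 1 else 0

/-- The generators, indexed by `Fin m ⊕ Fin (2m)`. -/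
def gen (m : ℕ) : Fin m ⊕ Fin (2 * m) → (Fin (2 * m + 1) → ℕ) :=
  Sum.elim (uGen m) (vGen m)

/-- The exponent vector of `x₁ x₂ ⋯ x_{2m} x_{2m+1}^{2m-2}`. -/
def aVec (m : ℕ) : Fin (2 * m + 1) → ℕ :=
  fun k => if k.val = 2 * m then 2 * m - 2 else 1

/-- `F` is a face of the squarefree divisor complex `Δ_a`: `∏_{g ∈ F} x^{gen g}`
divides `x^a` within the affine semigroup ring. -/
def IsFace (m : ℕ) (F : Finset (Fin m ⊕ Fin (2 * m))) : Prop :=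
  ∃ c : Fin m ⊕ Fin (2 * m) → ℕ,
    aVec m = (∑ g ∈ F, gen m g) + ∑ g, c g • gen m g

/-- The candidate facet `F_i = {u_i} ∪ {v₁,…,v_{2m}} \ {v_{2i-1}, v_{2i}}`. -/
def facetF (m : ℕ) (i : Fin m) : Finset (Fin m ⊕ Fin (2 * m)) :=
  insert (Sum.inl i)
    ((Finset.univ.image Sum.inr) \
      {Sum.inr ⟨2 * i.val, by omega⟩, Sum.inr ⟨2 * i.val + 1, by omega⟩})


lemma mem_facetF_inl {m : ℕ} (i i' : Fin m) : Sum.inl i' ∈ facetF m i ↔ i' = i := by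
  simp [facetF]

lemma mem_facetF_inr {m : ℕ} (i : Fin m) (j : Fin (2 * m)) :
    Sum.inr j ∈ facetF m i ↔ (j.val ≠ 2 * i.val ∧ j.val ≠ 2 * i.val + 1) := by
  simp [facetF, Fin.ext_iff]

lemma range_pair (m : ℕ) (f : ℕ → ℕ) :
    ∑ j ∈ Finset.range (2 * m), f j = ∑ i ∈ Finset.range m, (f (2 * i) + f (2 * i + 1)) := by
  induction m with
  | zero => simp
  | succ n ih =>
    rw [show 2 * (n + 1) = 2 * n + 1 + 1 by ring, Finset.sum_range_succ, Finset.sum_range_succ,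
      Finset.sum_range_succ, ih, add_assoc]

lemma fin_pair (m : ℕ) (g : Fin (2 * m) → ℕ) :
    ∑ j : Fin (2 * m), g j =
      ∑ i : Fin m, (g ⟨2 * i.val, by omega⟩ + g ⟨2 * i.val + 1, by omega⟩) := by
  classical
  set G : ℕ → ℕ := fun j => if h : j < 2 * m then g ⟨j, h⟩ else 0 with hG
  have h1 : ∑ j : Fin (2 * m), g j = ∑ j ∈ Finset.range (2 * m), G j := by
    rw [← Fin.sum_univ_eq_sum_range]
    refine Finset.sum_congr rfl fun j _ => ?_
    simp [hG, j.isLt]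
  rw [h1, range_pair, ← Fin.sum_univ_eq_sum_range (fun i => G (2 * i) + G (2 * i + 1))]
  refine Finset.sum_congr rfl fun i _ => ?_
  have h2 : 2 * i.val < 2 * m := by omega
  have h3 : 2 * i.val + 1 < 2 * m := by omega
  simp [hG, h2, h3]

lemma eval_sum (m : ℕ) (d : Fin m ⊕ Fin (2 * m) → ℕ) (k : Fin (2 * m + 1)) :
    (∑ g, d g • gen m g) k =
      (if h : k.val < 2 * m then d (Sum.inl ⟨k.val / 2, by omega⟩) + d (Sum.inr ⟨k.val, h⟩)
       else ∑ j, d (Sum.inr j)) := by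
  classical
  have hk : (∑ g, d g • gen m g) k = ∑ g, d g * gen m g k := by
    rw [Finset.sum_apply]; rfl
  rw [hk, Fintype.sum_sum_type]
  by_cases h : k.val < 2 * m
  · rw [dif_pos h]
    have h1 : ∑ i : Fin m, d (Sum.inl i) * gen m (Sum.inl i) k
        = d (Sum.inl ⟨k.val / 2, by omega⟩) := by
      rw [Finset.sum_eq_single (⟨k.val / 2, by omega⟩ : Fin m)]
      · have : gen m (Sum.inl ⟨k.val / 2, by omega⟩) k = 1 := by
          simp only [gen, Sum.elim_inl, uGen]
          rw [if_pos]; omega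
        rw [this, mul_one]
      · intro i _ hne
        have : gen m (Sum.inl i) k = 0 := by
          simp only [gen, Sum.elim_inl, uGen]
          rw [if_neg]
          intro hc
          apply hne; apply Fin.ext; simp only
          omega
        rw [this, mul_zero]
      · intro hh; exact absurd (Finset.mem_univ _) hh
    have h2 : ∑ j : Fin (2 * m), d (Sum.inr j) * gen m (Sum.inr j) k
        = d (Sum.inr ⟨k.val, h⟩) := by
      rw [Finset.sum_eq_single (⟨k.val, h⟩ : Fin (2 * m))]
      · have : gen m (Sum.inr ⟨k.val, h⟩) k = 1 := by
          simp only [gen, Sum.elim_inr, vGen]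
          exact if_pos (Or.inl trivial)
        rw [this, mul_one]
      · intro j _ hne
        have : gen m (Sum.inr j) k = 0 := by
          simp only [gen, Sum.elim_inr, vGen]
          rw [if_neg]
          intro hc
          rcases hc with hc | hc
          · exact hne (Fin.ext hc.symm)
          · omega
        rw [this, mul_zero]
      · intro hh; exact absurd (Finset.mem_univ _) hh
    rw [h1, h2]
  · rw [dif_neg h]
    have hk2 : k.val = 2 * m := by omega
    have h1 : ∑ i : Fin m, d (Sum.inl i) * gen m (Sum.inl i) k = 0 := by
      refine Finset.sum_eq_zero fun i _ => ?_
      have : gen m (Sum.inl i) k = 0 := by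
        simp only [gen, Sum.elim_inl, uGen]
        rw [if_neg]; omega
      rw [this, mul_zero]
    have h2 : ∑ j : Fin (2 * m), d (Sum.inr j) * gen m (Sum.inr j) k
        = ∑ j, d (Sum.inr j) := by
      refine Finset.sum_congr rfl fun j _ => ?_
      have : gen m (Sum.inr j) k = 1 := by
        simp only [gen, Sum.elim_inr, vGen]
        exact if_pos (Or.inr hk2)
      rw [this, mul_one]
    rw [h1, h2, zero_add]

lemma sum_indicator_add (m : ℕ) (F : Finset (Fin m ⊕ Fin (2 * m)))
    (c : Fin m ⊕ Fin (2 * m) → ℕ) :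
    (∑ g ∈ F, gen m g) + ∑ g, c g • gen m g
      = ∑ g, ((if g ∈ F then 1 else 0) + c g) • gen m g := by
  classical
  have hind : (∑ g ∈ F, gen m g) = ∑ g, (if g ∈ F then 1 else 0) • gen m g := by
    symm
    calc ∑ g, (if g ∈ F then 1 else 0) • gen m g
        = ∑ g, (if g ∈ F then gen m g else 0) := by
          refine Finset.sum_congr rfl fun g _ => ?_
          split_ifs <;> simp
      _ = ∑ g ∈ Finset.univ ∩ F, gen m g := Finset.sum_ite_mem _ _ _
      _ = ∑ g ∈ F, gen m g := by rw [Finset.univ_inter]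
  rw [hind]
  rw [← Finset.sum_add_distrib]
  refine Finset.sum_congr rfl fun g _ => ?_
  rw [add_smul]

lemma coord_lt {m : ℕ} {d : Fin m ⊕ Fin (2 * m) → ℕ}
    (hEq : aVec m = ∑ g, d g • gen m g) (jn : ℕ) (h : jn < 2 * m) :
    d (Sum.inl ⟨jn / 2, by omega⟩) + d (Sum.inr ⟨jn, h⟩) = 1 := by
  have hc := congrFun hEq ⟨jn, by omega⟩
  rw [eval_sum] at hc
  dsimp only at hc
  rw [dif_pos h] at hc
  rw [aVec] at hc
  dsimp only at hc
  rw [if_neg (by omega)] at hc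
  exact hc.symm

lemma coord_top {m : ℕ} {d : Fin m ⊕ Fin (2 * m) → ℕ}
    (hEq : aVec m = ∑ g, d g • gen m g) :
    ∑ j, d (Sum.inr j) = 2 * m - 2 := by
  have hc := congrFun hEq ⟨2 * m, by omega⟩
  rw [eval_sum] at hc
  dsimp only at hc
  rw [dif_neg (by omega)] at hc
  rw [aVec] at hc
  dsimp only at hc
  rw [if_pos rfl] at hc
  exact hc.symm

lemma aVec_eq_sum_facet {m : ℕ} (i : Fin m) :
    aVec m = ∑ g, (if g ∈ facetF m i then 1 else 0) • gen m g := by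
  funext k
  rw [eval_sum]
  by_cases h : k.val < 2 * m
  · rw [dif_pos h]
    simp only [mem_facetF_inl, mem_facetF_inr, Fin.ext_iff]
    rw [aVec]
    rw [if_neg (by omega)]
    split_ifs <;> omega
  · rw [dif_neg h]
    have hk2 : k.val = 2 * m := by omega
    rw [aVec]
    rw [if_pos hk2]
    rw [fin_pair m (fun j => if Sum.inr j ∈ facetF m i then 1 else 0)]
    have hterm : ∀ i' : Fin m,
        ((if Sum.inr (⟨2 * i'.val, by omega⟩ : Fin (2 * m)) ∈ facetF m i then 1 else 0)
          + if Sum.inr (⟨2 * i'.val + 1, by omega⟩ : Fin (2 * m)) ∈ facetF m i then 1 else 0)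
        = if i' = i then 0 else 2 := by
      intro i'
      simp only [mem_facetF_inr, Fin.ext_iff]
      split_ifs <;> omega
    rw [Finset.sum_congr rfl fun i' _ => hterm i']
    rw [← Finset.add_sum_erase _ _ (Finset.mem_univ i), if_pos rfl, zero_add]
    have hz : ∀ i' ∈ Finset.univ.erase i, (if i' = i then 0 else 2) = 2 := by
      intro i' hi'
      rw [if_neg (Finset.ne_of_mem_erase hi')]
    rw [Finset.sum_congr rfl hz, Finset.sum_const, Finset.card_erase_of_mem (Finset.mem_univ i),
      Finset.card_univ, Fintype.card_fin, smul_eq_mul]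
    have := i.isLt
    omega

lemma face_facetF {m : ℕ} (i : Fin m) : IsFace m (facetF m i) := by
  refine ⟨fun _ => 0, ?_⟩
  have h := sum_indicator_add m (facetF m i) (fun _ => 0)
  simp only [add_zero] at h
  rw [h, ← aVec_eq_sum_facet]

lemma face_subset {m : ℕ} (hm : 2 ≤ m) {F : Finset (Fin m ⊕ Fin (2 * m))}
    (hF : IsFace m F) : ∃ i : Fin m, F ⊆ facetF m i := by
  classical
  obtain ⟨c, hc⟩ := hF
  set d : Fin m ⊕ Fin (2 * m) → ℕ := fun g => (if g ∈ F then 1 else 0) + c g with hd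
  have hEq : aVec m = ∑ g, d g • gen m g := by
    rw [hc, sum_indicator_add]
  -- pairwise equations
  have key1 : ∀ i : Fin m, d (Sum.inl i) + d (Sum.inr ⟨2 * i.val, by omega⟩) = 1 := by
    intro i
    have h := coord_lt hEq (2 * i.val) (by omega)
    have he : (⟨2 * i.val / 2, by omega⟩ : Fin m) = i :=
      Fin.ext (show 2 * i.val / 2 = i.val by omega)
    rwa [he] at h
  have key2 : ∀ i : Fin m, d (Sum.inl i) + d (Sum.inr ⟨2 * i.val + 1, by omega⟩) = 1 := by
    intro i
    have h := coord_lt hEq (2 * i.val + 1) (by omega)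
    have he : (⟨(2 * i.val + 1) / 2, by omega⟩ : Fin m) = i :=
      Fin.ext (show (2 * i.val + 1) / 2 = i.val by omega)
    rwa [he] at h
  -- sum of the u-coefficients is 1
  have hsumv : ∑ j, d (Sum.inr j) = 2 * m - 2 := coord_top hEq
  have hsumv' : ∑ i : Fin m, (d (Sum.inr ⟨2 * i.val, by omega⟩)
      + d (Sum.inr ⟨2 * i.val + 1, by omega⟩)) = 2 * m - 2 := by
    rw [← fin_pair m (fun j => d (Sum.inr j))]; exact hsumv
  have htot : ∑ i : Fin m, ((d (Sum.inl i) + d (Sum.inr ⟨2 * i.val, by omega⟩))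
      + (d (Sum.inl i) + d (Sum.inr ⟨2 * i.val + 1, by omega⟩))) = 2 * m := by
    rw [Finset.sum_congr rfl fun i _ => by rw [key1 i, key2 i], Finset.sum_const,
      Finset.card_univ, Fintype.card_fin, smul_eq_mul]
    omega
  have hsplit : (∑ i : Fin m, 2 * d (Sum.inl i)) + (∑ i : Fin m, (d (Sum.inr ⟨2 * i.val, by omega⟩)
      + d (Sum.inr ⟨2 * i.val + 1, by omega⟩)))
      = ∑ i : Fin m, (2 * d (Sum.inl i) + (d (Sum.inr ⟨2 * i.val, by omega⟩)
      + d (Sum.inr ⟨2 * i.val + 1, by omega⟩))) := Finset.sum_add_distrib.symm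
  have htot2 : ∑ i : Fin m, (2 * d (Sum.inl i) + (d (Sum.inr ⟨2 * i.val, by omega⟩)
      + d (Sum.inr ⟨2 * i.val + 1, by omega⟩))) = 2 * m :=
    (Finset.sum_congr rfl fun i _ => by ring).trans htot
  have hsum2 : ∑ i : Fin m, 2 * d (Sum.inl i) = 2 := by
    have h5 := hsplit.trans htot2
    rw [hsumv'] at h5
    omega
  have hsumu : ∑ i : Fin m, d (Sum.inl i) = 1 := by
    rw [← Finset.mul_sum] at hsum2; omega
  -- extract the unique index with t_i = 1
  have hex : ∃ i : Fin m, d (Sum.inl i) ≠ 0 := by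
    by_contra hno
    push_neg at hno
    rw [Finset.sum_eq_zero (fun i _ => hno i)] at hsumu
    omega
  obtain ⟨i, hi⟩ := hex
  have hsplit2 := (Finset.add_sum_erase _ (fun i => d (Sum.inl i)) (Finset.mem_univ i)).symm
  rw [hsplit2] at hsumu
  have hti : d (Sum.inl i) = 1 := by omega
  have hrest : ∀ i' : Fin m, i' ≠ i → d (Sum.inl i') = 0 := by
    intro i' hne
    have h0 : ∑ i'' ∈ Finset.univ.erase i, d (Sum.inl i'') = 0 := by omega
    exact (Finset.sum_eq_zero_iff.mp h0) i' (Finset.mem_erase.mpr ⟨hne, Finset.mem_univ _⟩)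
  have hv1 : d (Sum.inr ⟨2 * i.val, by omega⟩) = 0 := by have := key1 i; omega
  have hv2 : d (Sum.inr ⟨2 * i.val + 1, by omega⟩) = 0 := by have := key2 i; omega
  refine ⟨i, fun g hg => ?_⟩
  have hdg : 1 ≤ d g := by rw [hd]; simp [hg]
  match g with
  | Sum.inl i' =>
    have : i' = i := by
      by_contra hne
      rw [hrest i' hne] at hdg; omega
    rw [this, mem_facetF_inl]
  | Sum.inr j =>
    rw [mem_facetF_inr]
    constructor
    · intro hj
      have : j = ⟨2 * i.val, by omega⟩ := Fin.ext hj
      rw [this, hv1] at hdg; omega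
    · intro hj
      have : j = ⟨2 * i.val + 1, by omega⟩ := Fin.ext hj
      rw [this, hv2] at hdg; omega


/-- For `m ≥ 2`, the facets (maximal faces) of the squarefree divisor complex `Δ_a`
of `x₁ x₂ ⋯ x_{2m} x_{2m+1}^{2m-2}` are exactly the sets `F_i`, `i = 1,…,m`. -/
theorem stmt12 {m : ℕ} (hm : 2 ≤ m) (F : Finset (Fin m ⊕ Fin (2 * m))) :
    (IsFace m F ∧ ∀ F', IsFace m F' → F ⊆ F' → F' = F) ↔ ∃ i : Fin m, F = facetF m i := by
  constructor
  · rintro ⟨hF, hmax⟩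
    obtain ⟨i, hsub⟩ := face_subset hm hF
    exact ⟨i, (hmax _ (face_facetF i) hsub).symm⟩
  · rintro ⟨i, rfl⟩
    refine ⟨face_facetF i, fun F' hF' hsub => ?_⟩
    obtain ⟨i', hsub'⟩ := face_subset hm hF'
    have hii : i = i' := by
      have := hsub' (hsub (by rw [mem_facetF_inl]))
      rwa [mem_facetF_inl] at this
    exact Finset.Subset.antisymm (hii ▸ hsub') hsub
end
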